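/- For all v, r : Fin n → ℝ, setting d = v − r, one has A(P v − P r, d) + s(Q v − Q r, d) ≥ (1/4) · A(d, d). In other words, the operator T̃₁ defined by [T̃₁ r, z] = A(P r, z) + s(Q r, z) is strongly monotone with constant 1/4 with respect to the seminorm induced by A. -/

import Mathlib

/-!
Write `d = v - r`, `p = P v - P r` and `q = Q v - Q r = d - p`. Truncation is monotone and
1-Lipschitz in each coordinate, so `pᵢ` lies between `0` and `dᵢ`, i.e. `qᵢ pᵢ ≥ 0`; hence
`s(q, d) = s(q, q) + s(q, p) ≥ s(q, q) ≥ A(q, q)`. Then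
`A(p, d) + s(q, d) ≥ A(d, d) - A(q, d) + A(q, q) = (3/4) A(d, d) + A(q - d/2, q - d/2)`.
-/

lemma mul_sub_sub_nonneg_of_monotone_of_lipschitzWith_one {f : ℝ → ℝ} (hmono : Monotone f)
    (hlip : LipschitzWith 1 f) (x y : ℝ) :
    0 ≤ (f x - f y) * ((x - y) - (f x - f y)) := by
  have hdist : |f x - f y| ≤ |x - y| := by
    simpa [Real.dist_eq] using hlip.dist_le_mul x y
  rcases le_total x y with hxy | hyx
  · have hf := hmono hxy
    rw [abs_of_nonpos (sub_nonpos.2 hf), abs_of_nonpos (sub_nonpos.2 hxy)] at hdist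
    nlinarith
  · have hf := hmono hyx
    rw [abs_of_nonneg (sub_nonneg.2 hf), abs_of_nonneg (sub_nonneg.2 hyx)] at hdist
    nlinarith

lemma monotone_max_min (a b : ℝ) : Monotone fun x : ℝ => max a (min x b) :=
  monotone_const.max (monotone_id.min monotone_const)

lemma lipschitzWith_one_max_min (a b : ℝ) : LipschitzWith 1 fun x : ℝ => max a (min x b) :=
  (LipschitzWith.id.min_const b).const_max a

lemma LinearMap.BilinForm.apply_le_add_quarter {E : Type*} [AddCommGroup E] [Module ℝ E]
    (B : LinearMap.BilinForm ℝ E) (hsymm : ∀ x y, B x y = B y x) (hpsd : ∀ z, 0 ≤ B z z)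
    (x y : E) : B x y ≤ B x x + B y y / 4 := by
  have h := hpsd (x - (1 / 2 : ℝ) • y)
  simp only [map_sub, map_smul, LinearMap.sub_apply, LinearMap.smul_apply, smul_eq_mul,
    hsymm y x] at h
  linarith

theorem stmt_3_general (n : ℕ) (a b σ : Fin n → ℝ)
    (hσ : ∀ i, 0 < σ i)
    (P Q : (Fin n → ℝ) → (Fin n → ℝ))
    (hP : ∀ v i, P v i = max (a i) (min (v i) (b i)))
    (hQ : ∀ v, Q v = v - P v)
    (s : (Fin n → ℝ) → (Fin n → ℝ) → ℝ)
    (hs : ∀ w v, s w v = ∑ i, σ i * w i * v i)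
    (A : (Fin n → ℝ) → (Fin n → ℝ) → ℝ)
    (hA_add_left : ∀ x y z, A (x + y) z = A x z + A y z)
    (hA_smul_left : ∀ (c : ℝ) x z, A (c • x) z = c * A x z)
    (hA_symm : ∀ x z, A x z = A z x)
    (hA_psd : ∀ z, 0 ≤ A z z)
    (hA_le_s : ∀ z, A z z ≤ s z z)
    (v r : Fin n → ℝ) :
    A (P v - P r) (v - r) + s (Q v - Q r) (v - r) ≥ (1/4) * A (v - r) (v - r) := by
  let B : LinearMap.BilinForm ℝ (Fin n → ℝ) := LinearMap.mk₂ ℝ A hA_add_left hA_smul_left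
    (fun x y z => by rw [hA_symm, hA_add_left, hA_symm y, hA_symm z])
    (fun c x z => by rw [hA_symm, hA_smul_left, hA_symm, smul_eq_mul])
  set d := v - r
  set p := P v - P r
  have hq : Q v - Q r = d - p := by simp only [hQ, d, p]; abel
  have hqp : ∀ i, 0 ≤ (d - p) i * p i := fun i => by
    simpa [d, p, hP, mul_comm] using mul_sub_sub_nonneg_of_monotone_of_lipschitzWith_one
      (monotone_max_min (a i) (b i)) (lipschitzWith_one_max_min (a i) (b i)) (v i) (r i)
  have hs_mono : s (d - p) (d - p) ≤ s (d - p) d := by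
    rw [hs, hs]
    refine Finset.sum_le_sum fun i _ => ?_
    have hd : d i = (d - p) i + p i := by simp
    rw [hd]
    linarith [mul_nonneg (hσ i).le (hqp i)]
  have hA_sub : A (d - p) d = A d d - A p d := LinearMap.BilinForm.sub_left (B₁ := B) d p d
  have hquarter : A (d - p) d ≤ A (d - p) (d - p) + A d d / 4 :=
    B.apply_le_add_quarter hA_symm hA_psd (d - p) d
  rw [hq]
  linarith [hA_le_s (d - p), hA_psd d]

/-- Strong monotonicity (with constant `1/4`) of the operator
`[T̃₁ r, z] = A (P r) z + s (Q r) z`, where `A` is a symmetric positive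
semidefinite bilinear form dominated by `s`:
`A (P v - P r) (v - r) + s (Q v - Q r) (v - r) ≥ (1/4) * A (v - r) (v - r)`. -/
theorem stmt_3 (n : ℕ) (a b σ : Fin n → ℝ)
    (hab : ∀ i, a i ≤ b i) (hσ : ∀ i, 0 < σ i)
    (P Q : (Fin n → ℝ) → (Fin n → ℝ))
    (hP : ∀ v i, P v i = max (a i) (min (v i) (b i)))
    (hQ : ∀ v, Q v = v - P v)
    (s : (Fin n → ℝ) → (Fin n → ℝ) → ℝ)
    (hs : ∀ w v, s w v = ∑ i, σ i * w i * v i)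
    (A : (Fin n → ℝ) → (Fin n → ℝ) → ℝ)
    (hA_add_left : ∀ x y z, A (x + y) z = A x z + A y z)
    (hA_smul_left : ∀ (c : ℝ) x z, A (c • x) z = c * A x z)
    (hA_symm : ∀ x z, A x z = A z x)
    (hA_psd : ∀ z, 0 ≤ A z z)
    (hA_le_s : ∀ z, A z z ≤ s z z)
    (v r : Fin n → ℝ) :
    A (P v - P r) (v - r) + s (Q v - Q r) (v - r) ≥ (1/4) * A (v - r) (v - r) :=
  stmt_3_general n a b σ hσ P Q hP hQ s hs A hA_add_left hA_smul_left hA_symm hA_psd hA_le_s v r
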